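/- arXiv:math/0505519 — 5 statements merged into one kernel-verified Lean document; each statement's English description precedes it below -/
import Mathlib

section
/- A p-core (a partition with no cell of hook length p) never has both a removable corner and an addable corner of the same p-residue, where the p-residue of a lattice square (i,j) is (j-i) mod p. -/
/-- A partition: a weakly decreasing, finitely supported sequence of naturals
(0-indexed rows, French notation: row 0 is the bottom row). -/
structure Ptn where
  part : ℕ → ℕ
  antitone' : ∀ ⦃i j : ℕ⦄, i ≤ j → part j ≤ part i
  finite' : ∃ N, ∀ i, N ≤ i → part i = 0

namespace Ptn

/-- The diagram (set of cells) of a partition; cell `(i,j)` means row `i`, column `j`,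
both 0-indexed. -/
def cells (mu : Ptn) : Set (ℕ × ℕ) := {c | c.2 < mu.part c.1}

lemma colFinite (mu : Ptn) (j : ℕ) : {i : ℕ | j < mu.part i}.Finite := by
  obtain ⟨N, hN⟩ := mu.finite'
  apply (Set.finite_Iio N).subset
  intro i hi
  simp only [Set.mem_setOf_eq] at hi
  by_contra h
  simp only [Set.mem_Iio, not_lt] at h
  simp [hN i h] at hi

/-- Length of column `j` of `mu`, i.e. the `j`-th part of the conjugate partition. -/
noncomputable def colLen (mu : Ptn) (j : ℕ) : ℕ := Set.ncard {i : ℕ | j < mu.part i}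

/-- The conjugate partition. -/
noncomputable def conj (mu : Ptn) : Ptn where
  part := mu.colLen
  antitone' := by
    intro i j hij
    exact Set.ncard_le_ncard (fun t ht => lt_of_le_of_lt hij ht) (mu.colFinite i)
  finite' := by
    refine ⟨mu.part 0, fun j hj => ?_⟩
    unfold colLen
    convert Set.ncard_empty ℕ
    ext i
    simp only [Set.mem_setOf_eq, Set.mem_empty_iff_false, iff_false, not_lt]
    exact le_trans (mu.antitone' (Nat.zero_le i)) hj

end Ptn

namespace Ptn

/-- Hook length of the lattice square `(i,j)` (0-indexed) in `mu`. -/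
noncomputable def hook (mu : Ptn) (i j : ℕ) : ℕ :=
  (mu.part i - j) + (mu.colLen j - i) - 1

/-- Number of cells of the partition. -/
noncomputable def size (mu : Ptn) : ℕ := Set.ncard mu.cells

/-- Number of parts. -/
noncomputable def len (mu : Ptn) : ℕ := mu.colLen 0

end Ptn

/-- A `p`-core: a partition with no cell of hook length `p`. -/
def IsPCore (p : ℕ) (mu : Ptn) : Prop := ∀ i j, j < mu.part i → mu.hook i j ≠ p

/-- The `p`-residue of the lattice square `(i,j)` (0-indexed): `(j - i) mod p`. -/
def residue (p i j : ℕ) : ℤ := ((j : ℤ) - (i : ℤ)) % (p : ℤ)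

/-- A partition is `k`-bounded when all its parts are at most `k`. -/
def KBounded (k : ℕ) (mu : Ptn) : Prop := mu.part 0 ≤ k

/-- The number of cells of hook length at most `k` in row `i` of `γ`. -/
noncomputable def rowCount (k : ℕ) (γ : Ptn) (i : ℕ) : ℕ :=
  Set.ncard {j : ℕ | j < γ.part i ∧ γ.hook i j ≤ k}

/-- Dominance order: `Dominates mu lam` means `mu ⊵ lam`. -/
def Dominates (mu lam : Ptn) : Prop :=
  mu.size = lam.size ∧
  ∀ n, (∑ i ∈ Finset.range n, lam.part i) ≤ ∑ i ∈ Finset.range n, mu.part i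

/-- Containment of partitions. -/
def SubPtn (nu mu : Ptn) : Prop := ∀ i, nu.part i ≤ mu.part i

/-- `mu/nu` is a horizontal `ℓ`-strip. -/
def HStrip (mu nu : Ptn) (l : ℕ) : Prop :=
  SubPtn nu mu ∧ mu.size = nu.size + l ∧ ∀ i, mu.part (i + 1) ≤ nu.part i

/-- `mu/nu` is a vertical `ℓ`-strip. -/
def VStrip (mu nu : Ptn) (l : ℕ) : Prop :=
  SubPtn nu mu ∧ mu.size = nu.size + l ∧ ∀ i, mu.part i ≤ nu.part i + 1

/-- `(i,j)` is a removable corner of `mu` (0-indexed). -/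
def Removable (mu : Ptn) (i j : ℕ) : Prop := j + 1 = mu.part i ∧ mu.part (i + 1) ≤ j

/-- `(i,j)` is an addable corner of `mu` (0-indexed). -/
def Addable (mu : Ptn) (i j : ℕ) : Prop :=
  j = mu.part i ∧ (i = 0 ∨ mu.part i < mu.part (i - 1))

/-- The cells of the skew shape `γ/ρ`. -/
def skewCells (γ ρ : Ptn) : Set (ℕ × ℕ) := {c | ρ.part c.1 ≤ c.2 ∧ c.2 < γ.part c.1}

/-- The hook length of the lattice square `(i,j)` relative to the skew shape `γ/ρ`:
the number of cells of `γ/ρ` lying in the L with corner `(i,j)`. -/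
noncomputable def skewHook (γ ρ : Ptn) (i j : ℕ) : ℕ :=
  Set.ncard {c : ℕ × ℕ | c ∈ skewCells γ ρ ∧ ((c.1 = i ∧ j ≤ c.2) ∨ (c.2 = j ∧ i ≤ c.1))}

/-- A filling of the shape `γ` with letters `1, …, r`: rows weakly increase and
columns strictly increase. Squares outside `γ` carry the value `0`. -/
structure Filling (γ : Ptn) (r : ℕ) where
  entry : ℕ × ℕ → ℕ
  supp : ∀ c : ℕ × ℕ, entry c ≠ 0 ↔ c ∈ γ.cells
  lettersLe : ∀ c ∈ γ.cells, entry c ≤ r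
  rowsWeak : ∀ i j j', j ≤ j' → j' < γ.part i → entry (i, j) ≤ entry (i, j')
  colsStrict : ∀ i j, j < γ.part (i + 1) → entry (i, j) < entry (i + 1, j)

/-- The number of distinct `(k+1)`-residues occupied by the letter `a` in a filling. -/
noncomputable def kweight (k : ℕ) {γ : Ptn} {r : ℕ} (F : Filling γ r) (a : ℕ) : ℕ :=
  Set.ncard {m : ℤ | ∃ c ∈ γ.cells, F.entry c = a ∧ residue (k + 1) c.1 c.2 = m}

/-- The number of cells occupied by the letter `a` in a filling. -/
noncomputable def cellweight {γ : Ptn} {r : ℕ} (F : Filling γ r) (a : ℕ) : ℕ :=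
  Set.ncard {c : ℕ × ℕ | c ∈ γ.cells ∧ F.entry c = a}

/-- A `k`-tableau: a filling in which, for each letter `a ∈ {1,…,r}`, the cells
containing `a` occupy exactly `α a` distinct `(k+1)`-residues. -/
def IsKTab (k : ℕ) {γ : Ptn} {r : ℕ} (F : Filling γ r) (α : ℕ → ℕ) : Prop :=
  ∀ a, 1 ≤ a → a ≤ r → kweight k F a = α a

/-- The number of `k`-tableaux of shape `γ` with letters `1,…,r` and `k`-weight `α`. -/
noncomputable def Kcard (k : ℕ) (γ : Ptn) (r : ℕ) (α : ℕ → ℕ) : ℕ :=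
  Nat.card {F : Filling γ r // IsKTab k F α}

/-- The weight function of a partition: letter `a` gets weight `lam_a`. -/
noncomputable def wtOf (lam : Ptn) : ℕ → ℕ := fun a => lam.part (a - 1)

/-- The `k`-Kostka number `K^{(k)}_{μλ}` (given the bijection `c` from `k`-bounded
partitions to `(k+1)`-cores): the number of `k`-tableaux of shape `c μ` and `k`-weight `λ`. -/
noncomputable def KNum (k : ℕ) (c : Ptn → Ptn) (mu lam : Ptn) : ℕ :=
  Kcard k (c mu) lam.len (wtOf lam)

/-- The `k`-conjugate `λ^{ω_k} = c⁻¹((c λ)')`, expressed via `c` and its inverse `cinv`. -/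
noncomputable def wkfun (c cinv : Ptn → Ptn) (lam : Ptn) : Ptn := cinv (Ptn.conj (c lam))

/-- Hypotheses on the bijection `c` from `k`-bounded partitions to `(k+1)`-cores and
its inverse `cinv`. -/
def CorePair (k : ℕ) (c cinv : Ptn → Ptn) : Prop :=
  (∀ lam, KBounded k lam →
      IsPCore (k + 1) (c lam) ∧ ∀ i, rowCount k (c lam) i = lam.part i) ∧
  (∀ lam, KBounded k lam → cinv (c lam) = lam) ∧
  (∀ γ, IsPCore (k + 1) γ → KBounded k (cinv γ) ∧ c (cinv γ) = γ) ∧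
  (∀ γ, IsPCore (k + 1) γ → IsPCore (k + 1) (Ptn.conj γ))

/-- The ring of symmetric functions, presented as the polynomial ring
`ℤ[h₁, h₂, h₃, …]` in the (algebraically independent) complete homogeneous
symmetric functions: the variable `X n` stands for `h_{n+1}`. -/
abbrev SF := MvPolynomial ℕ ℤ

/-- The complete homogeneous symmetric function `h_n` (with `h_n = 0` for `n < 0`,
`h_0 = 1`). -/
noncomputable def hh (n : ℤ) : SF :=
  if n < 0 then 0 else if n = 0 then 1 else MvPolynomial.X (n.toNat - 1)

/-- `h_λ = h_{λ_1} h_{λ_2} ⋯`. -/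
noncomputable def hprod (lam : Ptn) : SF := ∏ᶠ i : ℕ, hh (lam.part i)

/-- The Schur function `s_λ`, via the Jacobi–Trudi determinant
`s_λ = det(h_{λ_i - i + j})`. -/
noncomputable def schur (lam : Ptn) : SF :=
  Matrix.det (Matrix.of fun i j : Fin lam.len => hh ((lam.part i : ℤ) - (i : ℤ) + (j : ℤ)))

/-- The subring `Λ^{(k)} = ℤ[h_1, …, h_k]`. -/
noncomputable def Lk (k : ℕ) : Subalgebra ℤ SF :=
  Algebra.adjoin ℤ (Set.range fun i : Fin k => (MvPolynomial.X (i : ℕ) : SF))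

/-- `s` is the family of `k`-Schur functions: it satisfies the unitriangular system
`h_λ = s_λ^{(k)} + Σ_{μ ⊳ λ} K^{(k)}_{μλ} s_μ^{(k)}` over `k`-bounded partitions. -/
def KSchurFam (k : ℕ) (c : Ptn → Ptn) (s : Ptn → SF) : Prop :=
  ∀ lam, KBounded k lam →
    hprod lam = s lam +
      ∑ᶠ mu ∈ {mu : Ptn | KBounded k mu ∧ Dominates mu lam ∧ mu ≠ lam},
        (KNum k c mu lam) • s mu

/-- The column partition `(1^l)`. -/
def colPtn (l : ℕ) : Ptn where
  part := fun i => if i < l then 1 else 0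
  antitone' := by
    intro i j hij
    by_cases h : j < l
    · simp [h, Nat.lt_of_le_of_lt hij h]
    · simp [h]
  finite' := ⟨l, fun i hi => by simp [Nat.not_lt.mpr hi]⟩

/-- The elementary symmetric function `e_l = s_{(1^l)}`. -/
noncomputable def ee (l : ℕ) : SF := schur (colPtn l)

/-- Pointwise sum of partitions. -/
def addPtn (mu nu : Ptn) : Ptn where
  part := fun i => mu.part i + nu.part i
  antitone' := fun i j hij => Nat.add_le_add (mu.antitone' hij) (nu.antitone' hij)
  finite' := by
    obtain ⟨N, hN⟩ := mu.finite'
    obtain ⟨M, hM⟩ := nu.finite'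
    exact ⟨N + M, fun i hi => by
      show mu.part i + nu.part i = 0
      rw [hN i (le_trans (Nat.le_add_right N M) hi), hM i (le_trans (Nat.le_add_left M N) hi)]⟩

/-- `μ ∪ ν`: the weakly decreasing rearrangement of the concatenation of the parts
of `μ` and `ν` (obtained as the conjugate of the sum of the conjugates). -/
noncomputable def unionPtn (mu nu : Ptn) : Ptn := Ptn.conj (addPtn (Ptn.conj mu) (Ptn.conj nu))

/-- The `k`-rectangle `(l^{k-l+1})`. -/
def rectPtn (k l : ℕ) : Ptn where
  part := fun i => if i < k - l + 1 then l else 0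
  antitone' := by
    intro i j hij
    by_cases h : j < k - l + 1
    · simp [h, Nat.lt_of_le_of_lt hij h]
    · simp [h]
  finite' := ⟨k - l + 1, fun i hi => by simp [Nat.not_lt.mpr hi]⟩

/-!
Encode `mu` by its beta set `B = {mu_r - r}`. If `b = mu_i - i ∈ B` but `b - p ∉ B`, then
`b - p` falls strictly between two consecutive beta numbers `mu_(r+1) - (r+1)` and `mu_r - r`,
which singles out a cell of row `i` whose column has length `r + 1` and whose hook has length
`p`. So the beta set of a `p`-core is closed under `b ↦ b - p`.

A removable corner of content `c` means `c + 1 ∈ B` and `c ∉ B`; an addable corner of content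
`c'` means `c' ∈ B` and `c' + 1 ∉ B`. If `c ≡ c' (mod p)`, closure carries `c'` down to `c`
when `c ≤ c'`, and `c + 1` down to `c' + 1` otherwise: a contradiction either way.
-/

theorem StrictAnti.exists_apply_succ_lt_lt_apply {f : ℕ → ℤ} (hf : StrictAnti f) {x : ℤ}
    (hx : x ∉ Set.range f) (hx0 : x < f 0) : ∃ r, f (r + 1) < x ∧ x < f r := by
  have hbound : ∀ n : ℕ, f n + n ≤ f 0 := by
    intro n
    induction n with
    | zero => simp
    | succ n ih => have := hf n.lt_add_one; push_cast; omega
  have hex : ∃ n, f n < x := ⟨(f 0 - x).toNat + 1, by have := hbound ((f 0 - x).toNat + 1); omega⟩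
  obtain ⟨r, hr⟩ : ∃ r, Nat.find hex = r + 1 :=
    Nat.exists_eq_succ_of_ne_zero fun h => by have := Nat.find_spec hex; rw [h] at this; omega
  have hle : x ≤ f r := not_lt.mp (Nat.find_min hex (by omega))
  refine ⟨r, hr ▸ Nat.find_spec hex, lt_of_le_of_ne hle ?_⟩
  rintro rfl
  exact hx ⟨r, rfl⟩

def content (i j : ℕ) : ℤ := (j : ℤ) - i

namespace Ptn

def beta (mu : Ptn) (r : ℕ) : ℤ := (mu.part r : ℤ) - r

def betaSet (mu : Ptn) : Set ℤ := Set.range mu.beta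

theorem beta_strictAnti (mu : Ptn) : StrictAnti mu.beta := by
  intro r s hrs
  have := mu.antitone' hrs.le
  unfold beta
  omega

theorem colLen_eq_of_part_le_of_lt_part (mu : Ptn) {r j : ℕ} (h₁ : mu.part (r + 1) ≤ j)
    (h₂ : j < mu.part r) : mu.colLen j = r + 1 := by
  have hset : {i : ℕ | j < mu.part i} = Set.Iio (r + 1) := by
    ext i
    simp only [Set.mem_setOf_eq, Set.mem_Iio]
    constructor
    · intro hi
      by_contra! hri
      have := mu.antitone' hri
      omega
    · intro hi
      have := mu.antitone' (Nat.lt_succ_iff.mp hi)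
      omega
  rw [colLen, hset, Set.ncard_Iio_nat]

end Ptn

open Ptn

theorem IsPCore.sub_mem_betaSet {p : ℕ} {mu : Ptn} (hcore : IsPCore p mu) {b : ℤ}
    (hb : b ∈ mu.betaSet) : b - p ∈ mu.betaSet := by
  obtain ⟨i, rfl⟩ := hb
  by_contra hnot
  have hp : 0 < p := Nat.pos_of_ne_zero fun h => hnot (by simp [h, betaSet])
  have hanti := mu.beta_strictAnti
  obtain ⟨r, hr₁, hr₂⟩ := hanti.exists_apply_succ_lt_lt_apply hnot
    (by have := hanti.antitone (Nat.zero_le i); omega)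
  have hir : i ≤ r := Nat.lt_succ_iff.mp (hanti.lt_iff_gt.mp (hr₁.trans (by omega)))
  -- column `j` has length `r + 1`, so the hook of `(i, j)` is `(mu_i - 1 - j) + (r - i) + 1 = p`
  obtain ⟨j, hj⟩ : ∃ j : ℕ, (j : ℤ) = mu.beta i - p + r :=
    ⟨(mu.beta i - p + r).toNat, by unfold beta at hr₁ ⊢; omega⟩
  unfold beta at hr₁ hr₂ hj
  have hcol : mu.colLen j = r + 1 := mu.colLen_eq_of_part_le_of_lt_part (by omega) (by omega)
  have hri := mu.antitone' hir
  refine hcore i j (by omega) ?_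
  rw [hook, hcol]
  omega

theorem IsPCore.mem_betaSet_of_modEq {p : ℕ} {mu : Ptn} (hcore : IsPCore p mu) {b c : ℤ}
    (hb : b ∈ mu.betaSet) (hcb : c ≤ b) (hmod : c ≡ b [ZMOD p]) : c ∈ mu.betaSet := by
  have hiter : ∀ n : ℕ, b - p * n ∈ mu.betaSet := by
    intro n
    induction n with
    | zero => simpa using hb
    | succ n ih => simpa [mul_add, sub_add_eq_sub_sub] using hcore.sub_mem_betaSet ih
  obtain ⟨k, hk⟩ := hmod.dvd
  rcases Nat.eq_zero_or_pos p with rfl | hp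
  · simpa [show c = b by simpa [sub_eq_zero, eq_comm] using hk] using hb
  · have hk0 : 0 ≤ k := nonneg_of_mul_nonneg_right (by omega) (Int.natCast_pos.mpr hp)
    lift k to ℕ using hk0
    simpa [← hk] using hiter k

theorem Removable.content_add_one_mem_betaSet {mu : Ptn} {i j : ℕ} (h : Removable mu i j) :
    content i j + 1 ∈ mu.betaSet :=
  ⟨i, by unfold beta content; have := h.1; omega⟩

theorem Removable.content_notMem_betaSet {mu : Ptn} {i j : ℕ} (h : Removable mu i j) :
    content i j ∉ mu.betaSet := by
  rintro ⟨r, hr⟩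
  have hanti := mu.beta_strictAnti
  have hir : i < r := hanti.lt_iff_gt.mp (by unfold beta content at *; have := h.1; omega)
  have := hanti.antitone (show i + 1 ≤ r from hir)
  unfold beta content at *
  have := h.2
  omega

theorem Addable.content_mem_betaSet {mu : Ptn} {i j : ℕ} (h : Addable mu i j) :
    content i j ∈ mu.betaSet :=
  ⟨i, by unfold beta content; rw [h.1]⟩

theorem Addable.content_add_one_notMem_betaSet {mu : Ptn} {i j : ℕ} (h : Addable mu i j) :
    content i j + 1 ∉ mu.betaSet := by
  rintro ⟨r, hr⟩
  have hanti := mu.beta_strictAnti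
  have hri : r < i := hanti.lt_iff_gt.mp (by unfold beta content at *; have := h.1; omega)
  have := hanti.antitone (Nat.le_sub_one_of_lt hri)
  unfold beta content at *
  obtain ⟨hj, h0 | hlt⟩ := h <;> omega

theorem stmt0_general (p : ℕ) (mu : Ptn) (hcore : IsPCore p mu)
    (i j i' j' : ℕ) (hrem : Removable mu i j) (hadd : Addable mu i' j') :
    residue p i j ≠ residue p i' j' := by
  intro hres
  have hmod : content i j ≡ content i' j' [ZMOD p] := hres
  rcases le_or_gt (content i j) (content i' j') with hle | hlt
  · exact hrem.content_notMem_betaSet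
      (hcore.mem_betaSet_of_modEq hadd.content_mem_betaSet hle hmod)
  · exact hadd.content_add_one_notMem_betaSet
      (hcore.mem_betaSet_of_modEq hrem.content_add_one_mem_betaSet (by omega)
        (hmod.add_right 1).symm)

/-- A `p`-core never has both a removable corner and an addable corner
of the same `p`-residue. -/
theorem stmt0 (p : ℕ) (hp : 0 < p) (mu : Ptn) (hcore : IsPCore p mu)
    (i j i' j' : ℕ) (hrem : Removable mu i j) (hadd : Addable mu i' j') :
    residue p i j ≠ residue p i' j' :=
  stmt0_general p mu hcore i j i' j' hrem hadd
end

section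
/- The map sending a (k+1)-core γ to the partition λ = (λ_1, ..., λ_ℓ), where λ_i is the number of cells in row i of γ whose hook length is at most k, is a bijection from the set of (k+1)-cores onto the set of k-bounded partitions (partitions with all parts at most k). -/
/-!
Build the core row by row from the top. A row of length `g` placed below a diagram with column
lengths `m`, whose bottom row has length `g₁ ≤ g`, has hook lengths `g - j + m j`; these strictly
decrease in `j`, and the last `g - g₁` of them are `g - g₁, …, 1`. So lengthening the row by one
cell raises its number of hooks `≤ k` by one exactly when the new length creates no hook `k + 1`,
and every length beyond `g₁ + k` creates one. Hence the admissible lengths are in increasing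
bijection with the counts `t, …, k`, where `t` is the count of the row above: the rows of a
`(k+1)`-core can be chosen one at a time to realise any `k`-bounded partition, in exactly one way.
-/

open Finset

section RowBelow

/-- Counts the cells of hook length at most `c` in a row of length `g` placed below a diagram
with column lengths `m`: the cell in column `j` has hook length `g - j + m j`. -/
def hookCount (m : ℕ → ℕ) (g c : ℕ) : ℕ := #{j ∈ range g | g - j + m j ≤ c}

def AvoidsHook (m : ℕ → ℕ) (g n : ℕ) : Prop := ∀ j < g, g - j + m j ≠ n

instance (m : ℕ → ℕ) (g n : ℕ) : Decidable (AvoidsHook m g n) := by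
  unfold AvoidsHook; infer_instance

variable {m : ℕ → ℕ} {g c : ℕ}

lemma hookCount_le : hookCount m g c ≤ c := by
  calc hookCount m g c ≤ #(Ico (g - c) g) := card_le_card fun j hj => by
        simp only [mem_filter, mem_range] at hj; simp only [mem_Ico]; omega
    _ ≤ c := by simp only [Nat.card_Ico]; omega

lemma hookCount_zero : hookCount m g 0 = 0 := by
  simp only [hookCount, card_eq_zero, filter_eq_empty_iff, mem_range]; omega

lemma hookCount_succ :
    hookCount m g (c + 1) = hookCount m g c + #{j ∈ range g | g - j + m j = c + 1} := by
  rw [hookCount, hookCount, ← card_union_of_disjoint (disjoint_filter.2 fun _ _ h => by omega),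
    ← filter_or]
  congr 1; exact filter_congr fun _ _ => by omega

lemma avoidsHook_iff_card_eq_zero :
    AvoidsHook m g c ↔ #{j ∈ range g | g - j + m j = c} = 0 := by
  simp [AvoidsHook, filter_eq_empty_iff]

lemma card_hook_eq_le_one (hm : Antitone m) : #{j ∈ range g | g - j + m j = c} ≤ 1 := by
  refine card_le_one.2 fun a ha b hb => ?_
  simp only [mem_filter, mem_range] at ha hb
  rcases lt_trichotomy a b with hab | rfl | hab
  · have := hm hab.le; omega
  · rfl
  · have := hm hab.le; omega

lemma hookCount_succ_succ (hg : m g = 0) : hookCount m (g + 1) (c + 1) = hookCount m g c + 1 := by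
  rw [hookCount, range_add_one, filter_insert, if_pos (by omega), card_insert_of_notMem (by simp),
    hookCount]
  congr 2; exact filter_congr fun j hj => by simp only [mem_range] at hj; omega

lemma avoidsHook_succ_succ_iff (hg : m g = 0) {n : ℕ} :
    AvoidsHook m (g + 1) (n + 1) ↔ n ≠ 0 ∧ AvoidsHook m g n := by
  constructor
  · intro h
    refine ⟨fun hn => h g (by omega) (by omega), fun j hj => ?_⟩
    have := h j (by omega); omega
  · rintro ⟨hn, h⟩ j hj
    rcases Nat.lt_succ_iff_lt_or_eq.1 hj with hj | rfl
    · have := h j hj; omega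
    · omega

lemma hookCount_succ_eq (hm : Antitone m) (hg : m g = 0) (k : ℕ) :
    hookCount m (g + 1) k = hookCount m g k + if AvoidsHook m (g + 1) (k + 1) then 1 else 0 := by
  rcases k with _ | c
  · simp [hookCount_zero, avoidsHook_succ_succ_iff hg]
  · have hiff := avoidsHook_succ_succ_iff hg (n := c + 1)
    rw [avoidsHook_iff_card_eq_zero (g := g)] at hiff
    have := card_hook_eq_le_one (g := g) (c := c + 1) hm
    rw [hookCount_succ_succ hg, hookCount_succ]
    split_ifs with h
    · have := (hiff.1 h).2; omega
    · have := mt hiff.2 h; omega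

end RowBelow

section Admissible

variable {m : ℕ → ℕ} {g₁ k : ℕ} (hm : Antitone m) (hz : ∀ j, g₁ ≤ j → m j = 0)
include hm hz

lemma hookCount_add_one_eq_count {g : ℕ} (hg : g₁ ≤ g) :
    hookCount m g k + 1 =
      hookCount m g₁ (k + 1) + Nat.count (fun l => g₁ ≤ l ∧ AvoidsHook m l (k + 1)) (g + 1) := by
  induction g, hg using Nat.le_induction with
  | base =>
    have hbelow : Nat.count (fun l => g₁ ≤ l ∧ AvoidsHook m l (k + 1)) g₁ = 0 :=
      Nat.count_iff_forall_not.2 fun l hl h => by omega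
    have := card_hook_eq_le_one (g := g₁) (c := k + 1) hm
    rw [Nat.count_succ, hbelow, hookCount_succ]
    simp only [le_refl, true_and, avoidsHook_iff_card_eq_zero]
    split_ifs <;> omega
  | succ g hg ih =>
    rw [Nat.count_succ, hookCount_succ_eq hm (hz g hg)]
    simp only [show g₁ ≤ g + 1 by omega, true_and]
    split_ifs <;> omega

lemma le_hookCount {g : ℕ} (hg : g₁ ≤ g) (hav : AvoidsHook m g (k + 1)) :
    hookCount m g₁ (k + 1) ≤ hookCount m g k := by
  have := hookCount_add_one_eq_count (k := k) hm hz hg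
  rw [Nat.count_succ, if_pos ⟨hg, hav⟩] at this
  omega

lemma eq_of_hookCount_eq {g g' : ℕ} (hg : g₁ ≤ g) (hg' : g₁ ≤ g') (hav : AvoidsHook m g (k + 1))
    (hav' : AvoidsHook m g' (k + 1)) (h : hookCount m g k = hookCount m g' k) : g = g' := by
  have e := hookCount_add_one_eq_count (k := k) hm hz hg
  have e' := hookCount_add_one_eq_count (k := k) hm hz hg'
  rw [Nat.count_succ, if_pos ⟨hg, hav⟩] at e
  rw [Nat.count_succ, if_pos ⟨hg', hav'⟩] at e'
  exact Nat.count_injective (p := fun l => g₁ ≤ l ∧ AvoidsHook m l (k + 1)) ⟨hg, hav⟩ ⟨hg', hav'⟩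
    (by omega)

/-- The `r`-th admissible length has count `hookCount m g₁ (k + 1) + r`, and the length `g₁ + k`
has the maximal count `k`. -/
lemma exists_hookCount_eq {t : ℕ} (ht₁ : hookCount m g₁ (k + 1) ≤ t) (htk : t ≤ k) :
    ∃ g, g₁ ≤ g ∧ AvoidsHook m g (k + 1) ∧ hookCount m g k = t := by
  have hmax : hookCount m (g₁ + k) k = k := by
    refine le_antisymm hookCount_le ?_
    calc k = #(Ico g₁ (g₁ + k)) := by simp
      _ ≤ hookCount m (g₁ + k) k := card_le_card fun j hj => by
        simp only [mem_Ico] at hj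
        simp only [mem_filter, mem_range, hz j hj.1]; omega
  have htop := hookCount_add_one_eq_count (k := k) hm hz (Nat.le_add_right g₁ k)
  have hr : ∀ hf : (Set.ofPred fun l => g₁ ≤ l ∧ AvoidsHook m l (k + 1)).Finite,
      t - hookCount m g₁ (k + 1) < #hf.toFinset :=
    fun hf => by have := Nat.count_le_card hf (g₁ + k + 1); omega
  obtain ⟨hg, hav⟩ := Nat.nth_mem _ hr
  refine ⟨_, hg, hav, ?_⟩
  have := hookCount_add_one_eq_count (k := k) hm hz hg
  rw [Nat.count_nth_succ hr] at this
  omega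

end Admissible

namespace Ptn

theorem ext {γ δ : Ptn} (h : ∀ i, γ.part i = δ.part i) : γ = δ := by
  obtain ⟨p, _, _⟩ := γ
  obtain ⟨q, _, _⟩ := δ
  obtain rfl : p = q := funext h
  rfl

def tail (γ : Ptn) : Ptn where
  part i := γ.part (i + 1)
  antitone' _ _ h := γ.antitone' (by omega)
  finite' := by
    obtain ⟨N, hN⟩ := γ.finite'
    exact ⟨N, fun i hi => hN _ (by omega)⟩

def cons (g : ℕ) (γ : Ptn) (hg : γ.part 0 ≤ g) : Ptn where
  part
    | 0 => g
    | i + 1 => γ.part i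
  antitone' := by
    rintro (_ | i) (_ | j) hij
    · exact le_rfl
    · exact (γ.antitone' (Nat.zero_le j)).trans hg
    · omega
    · exact γ.antitone' (by omega)
  finite' := by
    obtain ⟨N, hN⟩ := γ.finite'
    exact ⟨N + 1, fun | 0, h => by omega | i + 1, h => hN i (by omega)⟩

lemma tail_cons {g : ℕ} {γ : Ptn} (hg : γ.part 0 ≤ g) : (cons g γ hg).tail = γ :=
  Ptn.ext fun _ => rfl

variable (γ : Ptn)

lemma colLen_antitone : Antitone γ.colLen := fun _ _ h => γ.conj.antitone' h

lemma colLen_eq_zero {j : ℕ} (hj : γ.part 0 ≤ j) : γ.colLen j = 0 := by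
  rw [colLen, Set.ncard_eq_zero (γ.colFinite j)]
  ext i
  simpa using (γ.antitone' (Nat.zero_le i)).trans hj

lemma colLen_eq_colLen_tail_add_one {j : ℕ} (hj : j < γ.part 0) :
    γ.colLen j = γ.tail.colLen j + 1 := by
  have hset : {i | j < γ.part i} = insert 0 (Nat.succ '' {i | j < γ.tail.part i}) := by
    ext (_ | i) <;> simp [hj, tail]
  rw [colLen, hset, Set.ncard_insert_of_notMem (by simp) ((γ.tail.colFinite j).image _),
    Set.ncard_image_of_injective _ Nat.succ_injective, colLen]

lemma hook_zero {j : ℕ} (hj : j < γ.part 0) : γ.hook 0 j = γ.part 0 - j + γ.tail.colLen j := by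
  rw [hook, colLen_eq_colLen_tail_add_one γ hj]; omega

lemma hook_succ {i j : ℕ} (hj : j < γ.part (i + 1)) : γ.hook (i + 1) j = γ.tail.hook i j := by
  have h0 := colLen_eq_colLen_tail_add_one γ (hj.trans_le (γ.antitone' (Nat.zero_le _)))
  simp only [hook, tail] at h0 ⊢
  omega

end Ptn

open Ptn

lemma ncard_setOf_lt_and_eq_card_filter (g : ℕ) (P : ℕ → Prop) [DecidablePred P] :
    {j | j < g ∧ P j}.ncard = #{j ∈ range g | P j} := by
  rw [← Set.ncard_coe_finset, coe_filter]; simp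

section Cores

variable {k : ℕ}

lemma rowCount_succ (γ : Ptn) (i : ℕ) : rowCount k γ (i + 1) = rowCount k γ.tail i := by
  rw [rowCount, rowCount, ncard_setOf_lt_and_eq_card_filter, ncard_setOf_lt_and_eq_card_filter]
  congr 1
  exact filter_congr fun j hj => by rw [hook_succ γ (mem_range.1 hj)]

lemma rowCount_zero (γ : Ptn) : rowCount k γ 0 = hookCount γ.tail.colLen (γ.part 0) k := by
  rw [rowCount, ncard_setOf_lt_and_eq_card_filter, hookCount]
  congr 1
  exact filter_congr fun j hj => by rw [hook_zero γ (mem_range.1 hj)]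

lemma rowCount_zero_eq_hookCount_succ (γ : Ptn) :
    rowCount k γ 0 = hookCount γ.colLen (γ.part 0) (k + 1) := by
  rw [rowCount, ncard_setOf_lt_and_eq_card_filter, hookCount]
  congr 1
  exact filter_congr fun j hj => by simp only [hook, mem_range] at hj ⊢; omega

lemma rowCount_eq_zero {γ : Ptn} {i : ℕ} (h : γ.part i = 0) : rowCount k γ i = 0 := by
  simp [rowCount, h]

lemma rowCount_zero_le (γ : Ptn) : rowCount k γ 0 ≤ k := by
  rw [rowCount_zero]; exact hookCount_le

lemma isPCore_iff {p : ℕ} (γ : Ptn) :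
    IsPCore p γ ↔ AvoidsHook γ.tail.colLen (γ.part 0) p ∧ IsPCore p γ.tail := by
  constructor
  · intro h
    refine ⟨fun j hj => hook_zero γ hj ▸ h 0 j hj, fun i j hj => ?_⟩
    exact hook_succ γ hj ▸ h (i + 1) j hj
  · rintro ⟨h₀, h⟩ (_ | i) j hj
    · exact hook_zero γ hj ▸ h₀ j hj
    · exact hook_succ γ hj ▸ h i j hj

lemma rowCount_succ_le {γ : Ptn} (hγ : IsPCore (k + 1) γ) (i : ℕ) :
    rowCount k γ (i + 1) ≤ rowCount k γ i := by
  induction i generalizing γ with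
  | zero =>
    rw [rowCount_succ, rowCount_zero_eq_hookCount_succ, rowCount_zero]
    exact le_hookCount γ.tail.colLen_antitone (fun _ => γ.tail.colLen_eq_zero)
      (γ.antitone' (Nat.zero_le 1)) ((isPCore_iff γ).1 hγ).1
  | succ i ih =>
    rw [rowCount_succ, rowCount_succ γ i]
    exact ih ((isPCore_iff γ).1 hγ).2

noncomputable def rowCountPtn (k : ℕ) (γ : Ptn) (hγ : IsPCore (k + 1) γ) : Ptn where
  part := rowCount k γ
  antitone' := antitone_nat_of_succ_le (rowCount_succ_le hγ)
  finite' := by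
    obtain ⟨N, hN⟩ := γ.finite'
    exact ⟨N, fun i hi => rowCount_eq_zero (hN i hi)⟩

lemma eq_of_rowCount_eq {γ δ : Ptn} (hγ : IsPCore (k + 1) γ) (hδ : IsPCore (k + 1) δ)
    (h : ∀ i, rowCount k γ i = rowCount k δ i) : γ = δ := by
  obtain ⟨N, hN⟩ := γ.finite'
  obtain ⟨N', hN'⟩ := δ.finite'
  suffices ∀ n (γ δ : Ptn), γ.part n = 0 → δ.part n = 0 → IsPCore (k + 1) γ →
      IsPCore (k + 1) δ → (∀ i, rowCount k γ i = rowCount k δ i) → γ = δ from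
    this (N + N') γ δ (hN _ (by omega)) (hN' _ (by omega)) hγ hδ h
  intro n
  induction n with
  | zero =>
    intro γ δ hγ₀ hδ₀ _ _ _
    exact Ptn.ext fun i => by
      have := γ.antitone' (Nat.zero_le i); have := δ.antitone' (Nat.zero_le i); omega
  | succ n ih =>
    intro γ δ hγn hδn hγ hδ h
    rw [isPCore_iff] at hγ hδ
    have htail : γ.tail = δ.tail :=
      ih _ _ hγn hδn hγ.2 hδ.2 fun i => by rw [← rowCount_succ, ← rowCount_succ, h]
    have hrow : γ.part 0 = δ.part 0 := by
      rw [htail] at hγ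
      refine eq_of_hookCount_eq δ.tail.colLen_antitone (fun _ => δ.tail.colLen_eq_zero)
        ?_ (δ.antitone' (Nat.zero_le 1)) hγ.1 hδ.1 ?_
      · rw [← htail]; exact γ.antitone' (Nat.zero_le 1)
      · rw [← rowCount_zero, ← htail, ← rowCount_zero, h]
    refine Ptn.ext fun | 0 => hrow | i + 1 => ?_
    exact congrArg (Ptn.part · i) htail

lemma exists_isPCore_rowCount_eq {μ : Ptn} (hμ : KBounded k μ) :
    ∃ γ, IsPCore (k + 1) γ ∧ ∀ i, rowCount k γ i = μ.part i := by
  obtain ⟨N, hN⟩ := μ.finite'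
  suffices ∀ n (μ : Ptn), μ.part n = 0 → KBounded k μ →
      ∃ γ, IsPCore (k + 1) γ ∧ ∀ i, rowCount k γ i = μ.part i from this N μ (hN N le_rfl) hμ
  intro n
  induction n with
  | zero =>
    intro μ hμ₀ _
    refine ⟨⟨fun _ => 0, fun _ _ _ => le_rfl, 0, fun _ _ => rfl⟩, fun _ _ h => absurd h (by simp),
      fun i => ?_⟩
    have := μ.antitone' (Nat.zero_le i)
    rw [rowCount_eq_zero rfl]; omega
  | succ n ih =>
    intro μ hμn hμ
    obtain ⟨γ, hγ, hrow⟩ :=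
      ih μ.tail hμn ((μ.antitone' (Nat.zero_le 1)).trans hμ)
    obtain ⟨g, hg, hav, hcount⟩ := exists_hookCount_eq γ.colLen_antitone
      (fun _ => γ.colLen_eq_zero) (t := μ.part 0)
      (by rw [← rowCount_zero_eq_hookCount_succ, hrow]; exact μ.antitone' (Nat.zero_le 1)) hμ
    refine ⟨γ.cons g hg, (isPCore_iff _).2 ⟨by rwa [tail_cons], by rwa [tail_cons]⟩, ?_⟩
    rintro (_ | i)
    · rw [rowCount_zero, tail_cons]; exact hcount
    · rw [rowCount_succ, tail_cons]; exact hrow i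

end Cores

/-- the map sending a `(k+1)`-core `γ` to the sequence of counts of
cells of hook length at most `k` in each row of `γ` is a bijection from
`(k+1)`-cores onto `k`-bounded partitions. -/
theorem stmt2 (k : ℕ) :
    ∃ f : {γ : Ptn // IsPCore (k + 1) γ} → {lam : Ptn // KBounded k lam},
      (∀ γ i, ((f γ) : Ptn).part i = rowCount k (γ : Ptn) i) ∧ Function.Bijective f := by
  refine ⟨fun γ => ⟨rowCountPtn k γ.1 γ.2, rowCount_zero_le γ.1⟩, fun _ _ => rfl, ?_, ?_⟩
  · rintro ⟨γ, hγ⟩ ⟨δ, hδ⟩ h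
    exact Subtype.ext <| eq_of_rowCount_eq hγ hδ fun i => congrArg (fun μ => μ.1.part i) h
  · rintro ⟨μ, hμ⟩
    obtain ⟨γ, hγ, hrow⟩ := exists_isPCore_rowCount_eq hμ
    exact ⟨⟨γ, hγ⟩, Subtype.ext <| Ptn.ext hrow⟩
end

section
/- For a k-bounded partition λ, the k-skew diagram λ/^k obtained by the row-insertion algorithm (successively attaching a row of length λ_i below the previous rows in the leftmost position creating no hook length exceeding k) is well defined: row i has length λ_i, no cell of λ/^k has hook length exceeding k, and every square below λ/^k has hook length exceeding k. -/
/-!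
The shape `λ/^k` is built row by row from the top: the inner offset `ρ i` of row `i` is the
smallest value that keeps `ρ` a partition and makes row `i + (k - λ_i) + 1` end weakly left of
column `ρ i`. The second requirement leaves at most `k - λ_i` rows above row `i` that can
cover a cell of row `i`, so every hook is at most `k`. Conversely, a square `(i, j)` below the
shape lies below some row `t ≥ i` whose offset was forced by the second requirement; then the
`k - λ_t + 1` rows `t + 1, …, t + (k - λ_t) + 1` all cover column `j`, which pushes the hook of
`(i, j)` above `k`.
-/

def skewLeg (γ ρ : Ptn) (i j : ℕ) : Set ℕ := {t | i < t ∧ ρ.part t ≤ j ∧ j < γ.part t}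

lemma skewLeg_finite (γ ρ : Ptn) (i j : ℕ) : (skewLeg γ ρ i j).Finite := by
  obtain ⟨N, hN⟩ := γ.finite'
  refine (Set.finite_Iio N).subset fun t ⟨_, _, ht⟩ => ?_
  by_contra hNt
  rw [hN t (not_lt.mp hNt)] at ht
  exact Nat.not_lt_zero _ ht

lemma skewHook_eq_arm_add_leg (γ ρ : Ptn) (i j : ℕ) :
    skewHook γ ρ i j = (γ.part i - max j (ρ.part i)) + (skewLeg γ ρ i j).ncard := by
  have hsplit : {c : ℕ × ℕ | c ∈ skewCells γ ρ ∧ ((c.1 = i ∧ j ≤ c.2) ∨ (c.2 = j ∧ i ≤ c.1))} =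
      (fun t => (i, t)) '' Set.Ico (max j (ρ.part i)) (γ.part i) ∪
        (fun t => (t, j)) '' skewLeg γ ρ i j := by
    ext ⟨a, b⟩
    simp only [skewCells, skewLeg, Set.mem_ofPred_eq, Set.mem_union, Set.mem_image,
      Set.mem_Ico, Prod.mk.injEq, max_le_iff]
    constructor
    · rintro ⟨⟨hρ, hγ⟩, ⟨rfl, hjb⟩ | ⟨rfl, hia⟩⟩
      · exact Or.inl ⟨b, ⟨⟨hjb, hρ⟩, hγ⟩, rfl, rfl⟩
      · rcases hia.lt_or_eq with hia | rfl
        · exact Or.inr ⟨a, ⟨hia, hρ, hγ⟩, rfl, rfl⟩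
        · exact Or.inl ⟨b, ⟨⟨le_rfl, hρ⟩, hγ⟩, rfl, rfl⟩
    · rintro (⟨t, ⟨⟨hjt, hρ⟩, hγ⟩, rfl, rfl⟩ | ⟨t, ⟨hit, hρ, hγ⟩, rfl, rfl⟩)
      · exact ⟨⟨hρ, hγ⟩, Or.inl ⟨rfl, hjt⟩⟩
      · exact ⟨⟨hρ, hγ⟩, Or.inr ⟨rfl, hit.le⟩⟩
  have hdisj : Disjoint ((fun t => (i, t)) '' Set.Ico (max j (ρ.part i)) (γ.part i))
      ((fun t => (t, j)) '' skewLeg γ ρ i j) := by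
    rw [Set.disjoint_left]
    rintro _ ⟨_, _, rfl⟩ ⟨t, ⟨hit, -, -⟩, hc⟩
    exact hit.ne' (congrArg Prod.fst hc)
  rw [skewHook, hsplit, Set.ncard_union_eq hdisj ((Set.finite_Ico _ _).image _)
    ((skewLeg_finite γ ρ i j).image _), Set.ncard_image_of_injective _ (Prod.mk_right_injective i),
    Set.ncard_image_of_injective _ (Prod.mk_left_injective j), Set.ncard_Ico_nat]

lemma skewHook_le_add {γ ρ : Ptn} {i j m : ℕ} (hj : ρ.part i ≤ j)
    (hblock : γ.part (i + m + 1) ≤ j) : skewHook γ ρ i j ≤ γ.part i - j + m := by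
  have hleg : skewLeg γ ρ i j ⊆ Set.Ioo i (i + m + 1) := by
    rintro t ⟨hit, -, hγ⟩
    refine ⟨hit, lt_of_not_ge fun hmt => ?_⟩
    exact (γ.antitone' hmt).not_gt (lt_of_le_of_lt hblock hγ)
  have hcard := Set.ncard_le_ncard hleg (Set.finite_Ioo _ _)
  rw [Set.ncard_Ioo_nat] at hcard
  rw [skewHook_eq_arm_add_leg, max_eq_left hj]
  omega

lemma add_succ_le_skewHook {γ ρ : Ptn} {i j t m : ℕ} (hj : j < ρ.part i)
    (hρ : ρ.part (t + 1) ≤ j) (hγ : j < γ.part (t + m + 1)) :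
    γ.part i - ρ.part i + (m + 1) ≤ skewHook γ ρ i j := by
  have hit : i < t + 1 := lt_of_not_ge fun h => (ρ.antitone' h).not_gt (hρ.trans_lt hj)
  have hleg : Set.Icc (t + 1) (t + m + 1) ⊆ skewLeg γ ρ i j := fun s ⟨hts, hsm⟩ =>
    ⟨hit.trans_le hts, (ρ.antitone' hts).trans hρ, hγ.trans_le (γ.antitone' hsm)⟩
  have hcard := Set.ncard_le_ncard hleg (skewLeg_finite γ ρ i j)
  rw [Set.ncard_Icc_nat] at hcard
  rw [skewHook_eq_arm_add_leg, max_eq_right hj.le]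
  omega

lemma exists_le_and_not_succ {p : ℕ → Prop} {i n : ℕ} (hi : p i) (hn : ¬ p n) (hin : i ≤ n) :
    ∃ t, i ≤ t ∧ p t ∧ ¬ p (t + 1) := by
  by_contra! h
  exact hn (Nat.le_induction hi (fun t hit ht => h t hit ht) n hin)

section KSkewInner

variable (k N : ℕ) (f : ℕ → ℕ)

/-- The inner offsets of `λ/^k` for the row lengths `f` of `λ`, which vanish from row `N` on. -/
def kSkewInner (i : ℕ) : ℕ :=
  if N ≤ i then 0
  else max (kSkewInner (i + 1))
    (kSkewInner (i + (k - f i) + 1) + f (i + (k - f i) + 1))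
termination_by N - i

variable {k N f}

lemma kSkewInner_of_le {i : ℕ} (h : N ≤ i) : kSkewInner k N f i = 0 := by
  rw [kSkewInner, if_pos h]

lemma kSkewInner_eq (hN : ∀ i, N ≤ i → f i = 0) (i : ℕ) :
    kSkewInner k N f i = max (kSkewInner k N f (i + 1))
      (kSkewInner k N f (i + (k - f i) + 1) + f (i + (k - f i) + 1)) := by
  by_cases h : N ≤ i
  · rw [kSkewInner_of_le h, kSkewInner_of_le (by omega), kSkewInner_of_le (by omega),
      hN _ (by omega)]
    rfl
  · rw [kSkewInner, if_neg h]

lemma antitone_kSkewInner (hN : ∀ i, N ≤ i → f i = 0) : Antitone (kSkewInner k N f) :=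
  antitone_nat_of_succ_le fun i => (kSkewInner_eq hN i).symm ▸ le_max_left _ _

lemma kSkewInner_add_le (hN : ∀ i, N ≤ i → f i = 0) (i : ℕ) :
    kSkewInner k N f (i + (k - f i) + 1) + f (i + (k - f i) + 1) ≤ kSkewInner k N f i :=
  (kSkewInner_eq hN i).symm ▸ le_max_right _ _

lemma lt_kSkewInner_add (hN : ∀ i, N ≤ i → f i = 0) {i j : ℕ}
    (hj : j < kSkewInner k N f i) (hsucc : kSkewInner k N f (i + 1) ≤ j) :
    j < kSkewInner k N f (i + (k - f i) + 1) + f (i + (k - f i) + 1) := by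
  rw [kSkewInner_eq hN i] at hj
  exact (lt_max_iff.mp hj).resolve_left hsucc.not_gt

end KSkewInner

/-- for a `k`-bounded partition `λ` the `k`-skew diagram `λ/^k` is
well defined: there is a skew shape `γ/ρ` whose `i`-th row has length `λ_i`, none
of whose cells has hook length exceeding `k`, and all of whose squares below it
have hook length exceeding `k`. -/
theorem stmt6 (k : ℕ) (lam : Ptn) (hlam : KBounded k lam) :
    ∃ γ ρ : Ptn, SubPtn ρ γ ∧
      (∀ i, γ.part i = ρ.part i + lam.part i) ∧
      (∀ i j, (i, j) ∈ skewCells γ ρ → skewHook γ ρ i j ≤ k) ∧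
      (∀ i j, j < ρ.part i → k < skewHook γ ρ i j) := by
  obtain ⟨N, hN⟩ := lam.finite'
  have hk (i : ℕ) : lam.part i ≤ k := (lam.antitone' i.zero_le).trans hlam
  let ρ : Ptn := ⟨kSkewInner k N lam.part, fun _ _ h => antitone_kSkewInner hN h,
    ⟨N, fun _ => kSkewInner_of_le⟩⟩
  let γ : Ptn := ⟨fun i => ρ.part i + lam.part i,
    fun _ _ h => add_le_add (ρ.antitone' h) (lam.antitone' h),
    ⟨N, fun i hi => by simp [ρ, kSkewInner_of_le hi, hN i hi]⟩⟩
  have hrow (i : ℕ) : γ.part i = ρ.part i + lam.part i := rfl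
  refine ⟨γ, ρ, fun i => Nat.le_add_right _ _, hrow, ?_, ?_⟩
  · intro i j hcell
    have hρj : ρ.part i ≤ j := hcell.1
    have hhook := skewHook_le_add (γ := γ) hρj ((kSkewInner_add_le hN i).trans hρj)
    have := hrow i
    have := hk i
    omega
  · intro i j hj
    obtain ⟨t, hit, hjt, hρt⟩ := exists_le_and_not_succ (p := fun t => j < ρ.part t) hj
      (by simp [ρ, kSkewInner_of_le (le_max_right i N)]) (le_max_left i N)
    have hhook := add_succ_le_skewHook (γ := γ) hj (not_lt.mp hρt)
      (lt_kSkewInner_add hN hjt (not_lt.mp hρt))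
    have := hrow i
    have hmono := lam.antitone' hit
    have := hk t
    omega
end

section
/- If k ≥ λ_1 + ℓ(λ) - 1 for a partition λ, then every k-tableau of shape λ and k-weight μ is an ordinary semistandard tableau of weight μ, and conversely; in particular, in this case the k-Kostka number K^{(k)}_{λμ} equals the classical Kostka number K_{λμ}. -/
/-! When `λ₁ + ℓ(λ) ≤ k + 1`, the contents `j - i` of the cells of `λ` lie in an interval of
length at most `k + 1`, so two cells have the same `(k+1)`-residue only if they lie on the same
diagonal. In a semistandard filling the letters strictly increase along each diagonal, so the
cells carrying a given letter have pairwise distinct residues, and counting residues is the same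
as counting cells. -/

namespace Ptn

lemma lt_len_of_lt_part (lam : Ptn) {i j : ℕ} (h : j < lam.part i) : i < lam.len := by
  have hsub : Set.Iic i ⊆ {t : ℕ | 0 < lam.part t} := fun t ht =>
    lt_of_lt_of_le (Nat.zero_lt_of_lt h) (lam.antitone' (Set.mem_Iic.mp ht))
  have hcard := Set.ncard_le_ncard hsub (lam.colFinite 0)
  rw [← Finset.coe_Iic, Set.ncard_coe_finset, Nat.card_Iic] at hcard
  exact hcard

lemma lt_part_zero_of_lt_part (lam : Ptn) {i j : ℕ} (h : j < lam.part i) : j < lam.part 0 :=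
  lt_of_lt_of_le h (lam.antitone' (Nat.zero_le i))

lemma diag_eq_of_residue_eq {k : ℕ} {lam : Ptn} (hhook : lam.part 0 + lam.len ≤ k + 1)
    {c c' : ℕ × ℕ} (hc : c ∈ lam.cells) (hc' : c' ∈ lam.cells)
    (hres : residue (k + 1) c.1 c.2 = residue (k + 1) c'.1 c'.2) :
    (c.2 : ℤ) - c.1 = (c'.2 : ℤ) - c'.1 := by
  have := lam.lt_len_of_lt_part hc
  have := lam.lt_len_of_lt_part hc'
  have := lam.lt_part_zero_of_lt_part hc
  have := lam.lt_part_zero_of_lt_part hc'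
  have hdvd : ((k + 1 : ℕ) : ℤ) ∣ ((c'.2 : ℤ) - c'.1) - ((c.2 : ℤ) - c.1) := Int.ModEq.dvd hres
  have habs : |((c'.2 : ℤ) - c'.1) - ((c.2 : ℤ) - c.1)| < ((k + 1 : ℕ) : ℤ) := by
    rw [abs_lt]
    omega
  linarith [Int.eq_zero_of_abs_lt_dvd hdvd habs]

end Ptn

namespace Filling

variable {lam : Ptn} {r : ℕ} (F : Filling lam r)

lemma entry_add_le_entry_add_diag {i j d : ℕ} (h : j + d < lam.part (i + d)) :
    F.entry (i, j) + d ≤ F.entry (i + d, j + d) := by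
  induction d with
  | zero => simp
  | succ d ih =>
    simp only [← Nat.add_assoc] at h ⊢
    have hcol := F.colsStrict (i + d) (j + d) (lt_of_le_of_lt (by omega) h)
    have hrow := F.rowsWeak (i + d + 1) (j + d) (j + d + 1) (Nat.le_succ _) h
    have := ih (lt_of_lt_of_le (Nat.lt_of_succ_lt h) (lam.antitone' (Nat.le_succ _)))
    omega

lemma eq_of_diag_eq_of_entry_eq {c c' : ℕ × ℕ} (hc : c ∈ lam.cells) (hc' : c' ∈ lam.cells)
    (hdiag : (c.2 : ℤ) - c.1 = (c'.2 : ℤ) - c'.1) (hentry : F.entry c = F.entry c') :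
    c = c' := by
  wlog hle : c.1 ≤ c'.1 generalizing c c'
  · exact (this hc' hc hdiag.symm hentry.symm (le_of_not_ge hle)).symm
  obtain ⟨i, j⟩ := c
  obtain ⟨i', j'⟩ := c'
  simp only [Ptn.cells, Set.mem_ofPred_eq] at hc hc' hdiag hentry hle
  obtain ⟨d, rfl⟩ := Nat.exists_eq_add_of_le hle
  obtain rfl : j' = j + d := by omega
  have := F.entry_add_le_entry_add_diag hc'
  obtain rfl : d = 0 := by omega
  rfl

end Filling

lemma kweight_eq_cellweight {k r : ℕ} {lam : Ptn} (hhook : lam.part 0 + lam.len ≤ k + 1)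
    (F : Filling lam r) (a : ℕ) : kweight k F a = cellweight F a := by
  have himage : {m : ℤ | ∃ c ∈ lam.cells, F.entry c = a ∧ residue (k + 1) c.1 c.2 = m} =
      (fun c : ℕ × ℕ => residue (k + 1) c.1 c.2) '' {c | c ∈ lam.cells ∧ F.entry c = a} := by
    ext m
    simp only [Set.mem_ofPred_eq, Set.mem_image, and_assoc]
  have hinj : Set.InjOn (fun c : ℕ × ℕ => residue (k + 1) c.1 c.2)
      {c | c ∈ lam.cells ∧ F.entry c = a} := fun c ⟨hc, ha⟩ c' ⟨hc', ha'⟩ hres =>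
    F.eq_of_diag_eq_of_entry_eq hc hc' (Ptn.diag_eq_of_residue_eq hhook hc hc' hres)
      (ha.trans ha'.symm)
  rw [kweight, himage, hinj.ncard_image, cellweight]

/-- if `k ≥ λ₁ + ℓ(λ) - 1`, then `k`-tableaux of shape `λ` are
exactly the semistandard tableaux (the number of residues occupied by each letter
equals its number of cells), and hence `K^{(k)}_{λμ}` equals the classical Kostka
number. -/
theorem stmt8 (k r : ℕ) (lam : Ptn) (hhook : lam.part 0 + lam.len ≤ k + 1) :
    (∀ F : Filling lam r, ∀ a, 1 ≤ a → a ≤ r → kweight k F a = cellweight F a) ∧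
    (∀ α : ℕ → ℕ,
      Kcard k lam r α =
        Nat.card {F : Filling lam r // ∀ a, 1 ≤ a → a ≤ r → cellweight F a = α a}) := by
  refine ⟨fun F a _ _ => kweight_eq_cellweight hhook F a, fun α => ?_⟩
  refine Nat.card_congr (Equiv.subtypeEquivRight fun F => ?_)
  simp only [IsKTab, kweight_eq_cellweight hhook F]
end

section
/- The k-Schur functions {s_λ^{(k)}}, defined by inverting the unitriangular system h_λ = s_λ^{(k)} + Σ_{μ ⊳ λ} K^{(k)}_{μλ} s_μ^{(k)} over k-bounded partitions λ, form a basis of the ring Λ^{(k)} = ℤ[h_1, …, h_k], and each s_λ^{(k)} expands as s_λ plus an integer combination of Schur functions s_μ with μ strictly dominating λ. -/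
/-!
Order partitions by dominance. Only finitely many partitions lie above a given one, so the order
is well founded upwards, and a unitriangular system `x λ = y λ + ∑_{μ ⊳ λ} a_μ y μ` can be solved
and inverted by induction from the top. The defining system makes `h_λ` unitriangular in the
`s^{(k)}_μ` over `k`-bounded partitions, so `s^{(k)}` is unitriangular in the `h_μ`, which are
distinct monomials of `ℤ[h₁, …, h_k]`: this gives the basis. In the Jacobi–Trudi determinant
every non-identity permutation contributes `±h_μ` with `μ ⊳ λ`, so `s_λ` is unitriangular in the
`h_μ` too; inverting and composing the two expands `s^{(k)}_λ` in Schur functions.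
-/

open Finset

namespace Ptn

lemma ext_part {lam mu : Ptn} (h : lam.part = mu.part) : lam = mu := by
  cases lam; cases mu; simpa using h

def psum (lam : Ptn) (n : ℕ) : ℕ := ∑ i ∈ range n, lam.part i

lemma psum_mono (lam : Ptn) : Monotone lam.psum :=
  fun _ _ hab => sum_le_sum_of_subset (range_subset_range.2 hab)

lemma psum_succ (lam : Ptn) (n : ℕ) : lam.psum (n + 1) = lam.psum n + lam.part n :=
  sum_range_succ _ _

lemma ext_psum {lam mu : Ptn} (h : ∀ n, lam.psum n = mu.psum n) : lam = mu := by
  refine ext_part (funext fun i => ?_)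
  have := h (i + 1)
  rw [psum_succ, psum_succ, h i] at this
  omega

lemma psum_eq_of_le {lam : Ptn} {N m : ℕ} (hN : ∀ i, N ≤ i → lam.part i = 0) (hm : N ≤ m) :
    lam.psum m = lam.psum N := by
  rw [psum, psum, ← sum_range_add_sum_Ico _ hm,
    sum_eq_zero fun i hi => hN i (mem_Ico.1 hi).1, add_zero]

lemma size_eq_psum {lam : Ptn} {N : ℕ} (hN : ∀ i, N ≤ i → lam.part i = 0) :
    lam.size = lam.psum N := by
  have hcells : lam.cells = ↑((range N).biUnion fun i => (range (lam.part i)).map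
      ⟨fun j => (i, j), Prod.mk_right_injective i⟩) := by
    ext ⟨i, j⟩
    simp only [cells, Set.mem_ofPred_eq, coe_biUnion, mem_coe, mem_range, mem_map,
      Function.Embedding.coeFn_mk, Prod.mk.injEq, Set.mem_iUnion, exists_prop]
    constructor
    · intro hj
      refine ⟨i, ?_, j, hj, rfl, rfl⟩
      by_contra hi
      rw [hN i (not_lt.1 hi)] at hj
      exact Nat.not_lt_zero _ hj
    · rintro ⟨_, _, _, hj, rfl, rfl⟩
      exact hj
  rw [size, hcells, Set.ncard_coe_finset, card_biUnion]
  · simp [psum]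
  · intro a _ b _ hab
    simp only [Function.onFun, disjoint_left, mem_map, Function.Embedding.coeFn_mk]
    rintro _ ⟨_, _, rfl⟩ ⟨_, _, h⟩
    exact hab (Prod.mk.inj h).1.symm

lemma psum_le_size (lam : Ptn) (n : ℕ) : lam.psum n ≤ lam.size := by
  obtain ⟨N, hN⟩ := lam.finite'
  rw [size_eq_psum (N := max n N) fun i hi => hN i (le_of_max_le_right hi)]
  exact lam.psum_mono (le_max_left _ _)

lemma part_le_size (lam : Ptn) (i : ℕ) : lam.part i ≤ lam.size :=
  calc lam.part i ≤ lam.part 0 := lam.antitone' (Nat.zero_le i)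
    _ = lam.psum 1 := by simp [psum]
    _ ≤ lam.size := lam.psum_le_size 1

lemma part_eq_zero_of_size_le (lam : Ptn) {i : ℕ} (h : lam.size ≤ i) : lam.part i = 0 := by
  by_contra hpos
  have : i + 1 ≤ lam.psum (i + 1) :=
    calc i + 1 = ∑ _ ∈ range (i + 1), 1 := by simp
      _ ≤ lam.psum (i + 1) := sum_le_sum fun j hj =>
        (Nat.one_le_iff_ne_zero.2 hpos).trans (lam.antitone' (Nat.lt_succ_iff.1 (mem_range.1 hj)))
  have := lam.psum_le_size (i + 1)
  omega

lemma finite_setOf_size_eq (n : ℕ) : {lam : Ptn | lam.size = n}.Finite := by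
  refine Set.Finite.of_finite_image
    (f := fun lam (i : Fin n) => (⟨min (lam.part i) n, by omega⟩ : Fin (n + 1)))
    (Set.toFinite _) fun lam hlam mu hmu h => ext_part (funext fun i => ?_)
  simp only [Set.mem_ofPred_eq] at hlam hmu
  rcases lt_or_ge i n with hi | hi
  · have hmin : min (lam.part i) n = min (mu.part i) n := Fin.mk.inj_iff.1 (congrFun h ⟨i, hi⟩)
    have := lam.part_le_size i
    have := mu.part_le_size i
    omega
  · rw [lam.part_eq_zero_of_size_le (hlam ▸ hi), mu.part_eq_zero_of_size_le (hmu ▸ hi)]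

end Ptn

/-- The dominance order: `λ ≤ μ` means `μ ⊵ λ`. -/
instance : PartialOrder Ptn where
  le lam mu := Dominates mu lam
  le_refl lam := ⟨rfl, fun _ => le_rfl⟩
  le_trans _ _ _ h₁ h₂ := ⟨h₂.1.trans h₁.1, fun n => (h₁.2 n).trans (h₂.2 n)⟩
  le_antisymm _ _ h₁ h₂ := Ptn.ext_psum fun n => le_antisymm (h₁.2 n) (h₂.2 n)

namespace Ptn

lemma le_iff_dominates {lam mu : Ptn} : lam ≤ mu ↔ Dominates mu lam := Iff.rfl

lemma Ioi_eq (lam : Ptn) : Set.Ioi lam = {mu | Dominates mu lam ∧ mu ≠ lam} := by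
  ext mu
  simp [lt_iff_le_and_ne, le_iff_dominates, eq_comm]

lemma finite_Ioi (lam : Ptn) : (Set.Ioi lam).Finite :=
  (finite_setOf_size_eq lam.size).subset fun _ h => (Set.mem_Ioi.1 h).le.1

instance : WellFoundedGT Ptn :=
  StrictAnti.wellFoundedGT (f := fun lam => (Set.Ioi lam).ncard) fun _ mu h =>
    Set.ncard_lt_ncard ⟨Set.Ioi_subset_Ioi h.le, fun hsub => lt_irrefl mu (hsub h)⟩
      (finite_Ioi _)

lemma le_of_psum_le {lam mu : Ptn} {N : ℕ} (hlam : ∀ i, N ≤ i → lam.part i = 0)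
    (hmu : ∀ i, N ≤ i → mu.part i = 0) (hle : ∀ m ≤ N, lam.psum m ≤ mu.psum m)
    (hN : lam.psum N = mu.psum N) : lam ≤ mu := by
  refine ⟨by rw [size_eq_psum hlam, size_eq_psum hmu, hN], fun m => ?_⟩
  rcases le_total m N with hm | hm
  · exact hle m hm
  · exact (psum_eq_of_le hlam hm).trans_le (hN.trans_le (psum_eq_of_le hmu hm).ge)

end Ptn

section Unitriangular

open Submodule

variable {α R M : Type*} [Ring R] [AddCommGroup M] [Module R M]

lemma Submodule.span_image_le_of_sub_mem {x y : α → M} {T : Set α}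
    (h : ∀ j ∈ T, x j - y j ∈ span R (y '' T)) : span R (x '' T) ≤ span R (y '' T) := by
  rw [span_le]
  rintro _ ⟨j, hj, rfl⟩
  simpa using add_mem (subset_span (Set.mem_image_of_mem y hj)) (h j hj)

lemma Submodule.exists_finsum_eq_of_mem_span_image {v : α → M} {T : Set α} (hT : T.Finite)
    {z : M} (hz : z ∈ span R (v '' T)) : ∃ d : α → R, z = ∑ᶠ i ∈ T, d i • v i := by
  obtain ⟨l, hl, rfl⟩ := (Finsupp.mem_span_image_iff_linearCombination R).1 hz
  refine ⟨l, ?_⟩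
  rw [finsum_mem_eq_finite_toFinset_sum _ hT, Finsupp.linearCombination_apply, Finsupp.sum]
  exact sum_subset (fun i hi => hT.mem_toFinset.2 (hl hi))
    fun i _ hi => by rw [Finsupp.notMem_support_iff.1 hi, zero_smul]

variable [PartialOrder α]

variable (R) in
def IsUnitriangular (S : Set α) (x y : α → M) : Prop :=
  ∀ i ∈ S, x i - y i ∈ span R (y '' (S ∩ Set.Ioi i))

namespace IsUnitriangular

variable {S : Set α} {x y : α → M}

lemma span_image_inter_Ioi_le_of_forall {i : α}
    (h : ∀ j ∈ S ∩ Set.Ioi i, x j - y j ∈ span R (y '' (S ∩ Set.Ioi j))) :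
    span R (x '' (S ∩ Set.Ioi i)) ≤ span R (y '' (S ∩ Set.Ioi i)) :=
  span_image_le_of_sub_mem fun j hj => span_mono (Set.image_mono
    (Set.inter_subset_inter_right _ (Set.Ioi_subset_Ioi hj.2.le))) (h j hj)

lemma span_image_inter_Ioi_le (h : IsUnitriangular R S x y) (i : α) :
    span R (x '' (S ∩ Set.Ioi i)) ≤ span R (y '' (S ∩ Set.Ioi i)) :=
  span_image_inter_Ioi_le_of_forall fun j hj => h j hj.1

lemma span_image_le (h : IsUnitriangular R S x y) : span R (x '' S) ≤ span R (y '' S) :=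
  span_image_le_of_sub_mem fun j hj =>
    span_mono (Set.image_mono Set.inter_subset_left) (h j hj)

lemma symm [WellFoundedGT α] (h : IsUnitriangular R S x y) : IsUnitriangular R S y x := by
  intro i
  induction i using WellFoundedGT.induction with
  | _ i ih =>
    intro hi
    have hle := span_image_inter_Ioi_le_of_forall (R := R) (x := y) (y := x) (i := i)
      fun j hj => ih j hj.2 hj.1
    simpa using hle (neg_mem (h i hi))

lemma linearIndependent (h : IsUnitriangular R S x y) (φ : α → M →ₗ[R] R)
    (hφ_self : ∀ i ∈ S, φ i (y i) = 1) (hφ_ne : ∀ i ∈ S, ∀ j ∈ S, i ≠ j → φ i (y j) = 0) :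
    LinearIndependent R fun i : S => x i := by
  classical
  rw [linearIndependent_iff]
  intro l hl
  by_contra hne
  obtain ⟨i₀, hi₀, hmin⟩ := Finset.exists_minimal (Finsupp.support_nonempty_iff.2 hne)
  have hcoord : ∀ i ∈ l.support, φ i₀ (x i) = if i = i₀ then 1 else 0 := by
    intro i hi
    have hker : span R (y '' (S ∩ Set.Ioi (i : α))) ≤ LinearMap.ker (φ i₀) := by
      rw [span_le]
      rintro _ ⟨j, ⟨hjS, hij⟩, rfl⟩
      refine hφ_ne i₀ i₀.2 j hjS ?_
      rintro rfl
      have hlt : i < i₀ := Subtype.coe_lt_coe.1 hij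
      exact not_le_of_gt hlt (hmin hi hlt.le)
    have hzero : φ i₀ (x i - y i) = 0 := hker (h i i.2)
    rw [map_sub, sub_eq_zero] at hzero
    rw [hzero]
    split_ifs with hii
    · rw [hii, hφ_self i₀ i₀.2]
    · exact hφ_ne i₀ i₀.2 i i.2 fun he => hii (Subtype.ext he).symm
  have := congrArg (φ i₀) hl
  rw [Finsupp.linearCombination_apply, Finsupp.sum, map_sum, map_zero,
    sum_eq_single i₀ (fun i hi hne => by simp [hcoord i hi, hne])
      (fun h => absurd hi₀ h)] at this
  simp [hcoord i₀ hi₀] at this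
  exact (Finsupp.mem_support_iff.1 hi₀) this

end IsUnitriangular

end Unitriangular

theorem existsUnique_of_unitriangular_system {α R M : Type*} [PartialOrder α] [WellFoundedGT α]
    [Semiring R] [AddCommGroup M] [Module R M] (S : Set α) (F : α → Finset α)
    (hF : ∀ i, ∀ j ∈ F i, i < j) (h : α → M) (K : α → α → R) :
    ∃! s : α → M, (∀ i ∉ S, s i = 0) ∧ ∀ i ∈ S, h i = s i + ∑ j ∈ F i, K j i • s j := by
  classical
  let s : α → M := WellFoundedGT.fix fun i IH =>
    if i ∈ S then h i - ∑ j ∈ (F i).attach, K j i • IH j (hF i j j.2) else 0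
  have hs : ∀ i, s i = if i ∈ S then h i - ∑ j ∈ F i, K j i • s j else 0 := fun i => by
    rw [show s i = _ from WellFoundedGT.fix_eq _ i, sum_attach (F i) fun j => K j i • s j]
  refine ⟨s, ⟨fun i hi => by rw [hs, if_neg hi], fun i hi => by rw [hs, if_pos hi]; abel⟩, ?_⟩
  rintro t ⟨ht₀, ht⟩
  funext i
  induction i using WellFoundedGT.induction with
  | _ i ih =>
    by_cases hi : i ∈ S
    · rw [hs, if_pos hi, eq_sub_iff_add_eq, ht i hi]
      exact congrArg _ (sum_congr rfl fun j hj => by rw [ih j (hF i j hj)])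
    · rw [hs, if_neg hi, ht₀ i hi]

namespace Ptn

lemma setOf_lt_part_eq_Iio (lam : Ptn) (j : ℕ) :
    {i | j < lam.part i} = Set.Iio (lam.colLen j) := by
  have hex : ∃ N, ¬ j < lam.part N := by
    obtain ⟨N, hN⟩ := lam.finite'
    exact ⟨N, by simp [hN N le_rfl]⟩
  have hIio : {i | j < lam.part i} = Set.Iio (Nat.find hex) := by
    ext i
    simp only [Set.mem_ofPred_eq, Set.mem_Iio]
    refine ⟨fun hi => lt_of_not_ge fun hle => Nat.find_spec hex
      (hi.trans_le (lam.antitone' hle)), fun hi => not_not.1 (Nat.find_min hex hi)⟩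
  have hcol : lam.colLen j = Nat.find hex := by
    rw [colLen, hIio, ← coe_range, Set.ncard_coe_finset, card_range]
  rw [hIio, hcol]

lemma lt_part_iff_lt_colLen (lam : Ptn) (i j : ℕ) : j < lam.part i ↔ i < lam.colLen j :=
  Set.ext_iff.1 (lam.setOf_lt_part_eq_Iio j) i

lemma part_pos_iff (lam : Ptn) (i : ℕ) : 0 < lam.part i ↔ i < lam.len :=
  lam.lt_part_iff_lt_colLen i 0

lemma part_eq_zero_of_len_le (lam : Ptn) {i : ℕ} (h : lam.len ≤ i) : lam.part i = 0 :=
  Nat.eq_zero_of_not_pos fun hi => (lam.part_pos_iff i).1 hi |>.not_ge h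

lemma colLen_le_len (lam : Ptn) (j : ℕ) : lam.colLen j ≤ lam.len :=
  (conj lam).antitone' (Nat.zero_le j)

lemma colLen_eq_card (lam : Ptn) (j : ℕ) :
    lam.colLen j = #{i ∈ range lam.len | j < lam.part i} := by
  rw [← card_range (lam.colLen j)]
  congr 1
  ext i
  simp only [mem_range, mem_filter, lt_part_iff_lt_colLen]
  exact ⟨fun h => ⟨h.trans_le (lam.colLen_le_len j), h⟩, And.right⟩

end Ptn

section CompleteHomogeneous

open MvPolynomial

lemma hh_natCast_of_pos {n : ℕ} (hn : 0 < n) : hh n = X (n - 1) := by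
  rw [hh, if_neg (by omega), if_neg (by omega), Int.toNat_natCast]

lemma hprod_eq_prod_range (lam : Ptn) {N : ℕ} (hN : ∀ i, N ≤ i → lam.part i = 0) :
    hprod lam = ∏ i ∈ range N, hh (lam.part i) :=
  finprod_eq_prod_of_mulSupport_subset _ fun i hi => by
    by_contra hiN
    exact hi (by simp [hN i (by simpa using hiN), hh])

/-- `expFn λ u` is the number of rows of length `u + 1`, i.e. the exponent of `X u = h_{u+1}` in
`h_λ`. -/
noncomputable def expFn (lam : Ptn) : ℕ →₀ ℕ :=
  ∑ i ∈ range lam.len, Finsupp.single (lam.part i - 1) 1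

lemma hprod_eq_monomial (lam : Ptn) : hprod lam = monomial (expFn lam) 1 := by
  rw [hprod_eq_prod_range lam fun i => lam.part_eq_zero_of_len_le, expFn, monomial_sum_one]
  refine prod_congr rfl fun i hi => ?_
  rw [hh_natCast_of_pos ((lam.part_pos_iff i).2 (mem_range.1 hi)), X]

lemma expFn_apply (lam : Ptn) (u : ℕ) :
    expFn lam u = #{i ∈ range lam.len | lam.part i - 1 = u} := by
  simp only [expFn, Finsupp.finsetSum_apply, Finsupp.single_apply, sum_boole, Nat.cast_id]

lemma colLen_eq_sum_expFn (lam : Ptn) {B : ℕ} (hB : lam.part 0 ≤ B) (j : ℕ) :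
    lam.colLen j = ∑ u ∈ Ico j B, expFn lam u := by
  rw [lam.colLen_eq_card, card_eq_sum_card_fiberwise (f := fun i => lam.part i - 1) (t := Ico j B)]
  · refine sum_congr rfl fun u hu => ?_
    rw [expFn_apply, filter_filter]
    refine congrArg card (filter_congr fun i hi => ?_)
    have := (lam.part_pos_iff i).2 (mem_range.1 hi)
    have := (mem_Ico.1 hu).1
    omega
  · intro i hi
    simp only [coe_filter, mem_range, Set.mem_ofPred_eq] at hi
    have := lam.antitone' (Nat.zero_le i)
    simp only [coe_Ico, Set.mem_Ico]
    omega

lemma expFn_injective : Function.Injective expFn := by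
  intro lam mu h
  have hcol : ∀ j, lam.colLen j = mu.colLen j := fun j => by
    rw [colLen_eq_sum_expFn lam (le_max_left (lam.part 0) (mu.part 0)),
      colLen_eq_sum_expFn mu (le_max_right (lam.part 0) (mu.part 0)), h]
  refine Ptn.ext_part (funext fun i => eq_of_forall_lt_iff fun j => ?_)
  rw [Ptn.lt_part_iff_lt_colLen, Ptn.lt_part_iff_lt_colLen, hcol]

lemma coeff_expFn_hprod_self (lam : Ptn) : coeff (expFn lam) (hprod lam) = 1 := by
  rw [hprod_eq_monomial, coeff_monomial, if_pos rfl]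

lemma coeff_expFn_hprod_of_ne {lam mu : Ptn} (h : lam ≠ mu) : coeff (expFn lam) (hprod mu) = 0 := by
  rw [hprod_eq_monomial, coeff_monomial, if_neg fun he => h (expFn_injective he).symm]

end CompleteHomogeneous

namespace Finset

lemma sum_le_sum_range_card_of_antitone {f : ℕ → ℕ} (hf : Antitone f) (t : Finset ℕ) :
    ∑ i ∈ t, f i ≤ ∑ i ∈ range #t, f i := by
  induction t using Finset.induction_on_max with
  | empty => simp
  | insert a t ha ih =>
    have hcard : #t ≤ a := by simpa using card_le_card fun x hx => mem_range.2 (ha x hx)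
    have ha' : a ∉ t := fun h => lt_irrefl a (ha a h)
    rw [sum_insert ha', card_insert_of_notMem ha', sum_range_succ, add_comm]
    exact add_le_add ih (hf hcard)

lemma sum_range_card_lt_sum_of_ne {t : Finset ℕ} (ht : t ≠ range #t) :
    ∑ i ∈ range #t, i < ∑ i ∈ t, i := by
  induction t using Finset.induction_on_max with
  | empty => simp at ht
  | insert a t ha ih =>
    have hcard : #t ≤ a := by simpa using card_le_card fun x hx => mem_range.2 (ha x hx)
    have ha' : a ∉ t := fun h => lt_irrefl a (ha a h)
    rw [sum_insert ha', card_insert_of_notMem ha', sum_range_succ] at *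
    by_cases hrange : t = range #t
    · have : #t ≠ a := fun he => ht (by rw [range_add_one, ← hrange, he])
      rw [← hrange]
      omega
    · have := ih hrange
      omega

lemma sum_range_card_le_sum (t : Finset ℕ) : ∑ i ∈ range #t, i ≤ ∑ i ∈ t, i := by
  by_cases ht : t = range #t
  · exact (congrArg (fun s => ∑ i ∈ s, i) ht).ge
  · exact (sum_range_card_lt_sum_of_ne ht).le

end Finset

namespace Ptn

/-- The entries of `β`, sorted into decreasing order. -/
noncomputable def ofTuple {n : ℕ} (β : Fin n → ℕ) : Ptn where
  part j := if h : j < n then β (Tuple.sort β (Fin.rev ⟨j, h⟩)) else 0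
  antitone' i j hij := by
    by_cases hj : j < n
    · rw [dif_pos hj, dif_pos (hij.trans_lt hj)]
      exact Tuple.monotone_sort β (Fin.rev_le_rev.2 (Fin.mk_le_mk.2 hij))
    · rw [dif_neg hj]
      exact Nat.zero_le _
  finite' := ⟨n, fun _ hi => dif_neg (not_lt.2 hi)⟩

variable {n : ℕ} (β : Fin n → ℕ)

lemma ofTuple_part (i : Fin n) :
    (ofTuple β).part i = β ((Fin.revPerm.trans (Tuple.sort β)) i) := by
  simp [ofTuple]

lemma ofTuple_part_of_le {j : ℕ} (hj : n ≤ j) : (ofTuple β).part j = 0 :=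
  dif_neg (not_lt.2 hj)

lemma hprod_ofTuple : hprod (ofTuple β) = ∏ i, hh (β i) := by
  rw [hprod_eq_prod_range _ fun _ => ofTuple_part_of_le β, ← Fin.prod_univ_eq_prod_range]
  simp only [ofTuple_part]
  exact Equiv.prod_comp _ fun i => hh (β i)

lemma psum_ofTuple : (ofTuple β).psum n = ∑ i, β i := by
  rw [psum, ← Fin.sum_univ_eq_sum_range]
  simp only [ofTuple_part]
  exact Equiv.sum_comp _ β

lemma sum_le_psum_ofTuple (t : Finset (Fin n)) : ∑ i ∈ t, β i ≤ (ofTuple β).psum #t := by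
  set e := Fin.revPerm.trans (Tuple.sort β)
  have hemb : Function.Injective fun i : Fin n => ((e.symm i : Fin n) : ℕ) :=
    Fin.val_injective.comp e.symm.injective
  calc ∑ i ∈ t, β i = ∑ j ∈ t.image fun i => ((e.symm i : Fin n) : ℕ), (ofTuple β).part j := by
        rw [sum_image fun _ _ _ _ h => hemb h]
        exact sum_congr rfl fun i _ => by rw [ofTuple_part, Equiv.apply_symm_apply]
    _ ≤ ∑ j ∈ range #(t.image fun i => ((e.symm i : Fin n) : ℕ)), (ofTuple β).part j :=
        sum_le_sum_range_card_of_antitone (fun _ _ h => (ofTuple β).antitone' h) _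
    _ = (ofTuple β).psum #t := by rw [card_image_of_injective _ hemb, psum]

lemma kBounded_ofTuple {k : ℕ} (h : ∀ i, β i ≤ k) : KBounded k (ofTuple β) := by
  show (if h : 0 < n then _ else 0) ≤ k
  split_ifs
  · exact h _
  · exact Nat.zero_le k

end Ptn

section BoundedSpan

open MvPolynomial Submodule

lemma hprod_mem_Lk {k : ℕ} {lam : Ptn} (h : KBounded k lam) : hprod lam ∈ Lk k := by
  rw [hprod_eq_prod_range lam fun _ => lam.part_eq_zero_of_len_le]
  refine Subalgebra.prod_mem _ fun i hi => ?_
  have hpos := (lam.part_pos_iff i).2 (mem_range.1 hi)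
  have hk : lam.part i ≤ k := (lam.antitone' (Nat.zero_le i)).trans h
  rw [hh_natCast_of_pos hpos]
  exact Algebra.subset_adjoin ⟨⟨lam.part i - 1, by omega⟩, rfl⟩

lemma exists_hprod_eq_of_mem_closure {k : ℕ} {p : SF}
    (hp : p ∈ Submonoid.closure (Set.range fun i : Fin k => (X (i : ℕ) : SF))) :
    ∃ lam, KBounded k lam ∧ hprod lam = p := by
  suffices ∃ (d : ℕ) (β : Fin d → ℕ), (∀ i, β i ≤ k) ∧ ∏ i, hh (β i) = p by
    obtain ⟨d, β, hβ, rfl⟩ := this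
    exact ⟨Ptn.ofTuple β, Ptn.kBounded_ofTuple β hβ, Ptn.hprod_ofTuple β⟩
  induction hp using Submonoid.closure_induction with
  | mem _ hx =>
    obtain ⟨i, rfl⟩ := hx
    exact ⟨1, fun _ => i + 1, fun _ => i.2, by
      rw [Fin.prod_univ_one, hh_natCast_of_pos (Nat.succ_pos _)]
      rfl⟩
  | one => exact ⟨0, Fin.elim0, fun i => i.elim0, by simp⟩
  | mul _ _ _ _ hx hy =>
    obtain ⟨d, β, hβ, rfl⟩ := hx
    obtain ⟨d', β', hβ', rfl⟩ := hy
    exact ⟨d + d', Fin.append β β', Fin.addCases (by simpa using hβ) (by simpa using hβ'),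
      by simp [Fin.prod_univ_add]⟩

lemma span_hprod_kBounded (k : ℕ) :
    span ℤ (hprod '' {lam | KBounded k lam}) = Subalgebra.toSubmodule (Lk k) := by
  refine le_antisymm (span_le.2 ?_) ?_
  · rintro _ ⟨lam, hlam, rfl⟩
    exact hprod_mem_Lk hlam
  · rw [Lk, Algebra.adjoin_eq_span]
    refine span_mono fun p hp => ?_
    obtain ⟨lam, hlam, rfl⟩ := exists_hprod_eq_of_mem_closure hp
    exact ⟨lam, hlam, rfl⟩

end BoundedSpan

namespace Equiv.Perm

variable {n : ℕ} (σ : Perm (Fin n))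

lemma sum_filter_val_lt {M : Type*} [AddCommMonoid M] {m : ℕ} (hm : m ≤ n) (f : ℕ → M) :
    ∑ i ∈ univ.filter (fun i => (σ i : ℕ) < m), f (σ i) = ∑ j ∈ range m, f j :=
  sum_nbij (fun i => (σ i : ℕ)) (fun _ hi => mem_range.2 (mem_filter.1 hi).2)
    (fun _ _ _ _ h => σ.injective (Fin.val_injective h))
    (fun j hj => ⟨σ.symm ⟨j, (mem_range.1 hj).trans_le hm⟩, by simpa using hj, by simp⟩)
    fun _ _ => rfl

lemma card_filter_val_lt {m : ℕ} (hm : m ≤ n) : #(univ.filter fun i => (σ i : ℕ) < m) = m := by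
  rw [card_eq_sum_ones, σ.sum_filter_val_lt hm fun _ => 1, sum_const, card_range, smul_eq_mul,
    mul_one]

lemma sum_range_le_sum_filter_val_lt {m : ℕ} (hm : m ≤ n) :
    ∑ j ∈ range m, j ≤ ∑ i ∈ univ.filter (fun i => (σ i : ℕ) < m), (i : ℕ) := by
  have := sum_range_card_le_sum ((univ.filter fun i => (σ i : ℕ) < m).map Fin.valEmbedding)
  rwa [card_map, σ.card_filter_val_lt hm, sum_map] at this

lemma exists_sum_range_lt_sum_filter_val_lt (hσ : σ ≠ 1) :
    ∃ m ≤ n, ∑ j ∈ range m, j < ∑ i ∈ univ.filter (fun i => (σ i : ℕ) < m), (i : ℕ) := by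
  by_contra! h
  have hrange : ∀ m ≤ n,
      (univ.filter fun i => (σ i : ℕ) < m).map Fin.valEmbedding = range m := by
    intro m hm
    by_contra hne
    have := sum_range_card_lt_sum_of_ne (t := (univ.filter fun i => (σ i : ℕ) < m).map
      Fin.valEmbedding) (by rwa [card_map, σ.card_filter_val_lt hm])
    rw [card_map, σ.card_filter_val_lt hm, sum_map] at this
    exact (h m hm).not_gt this
  refine hσ (Equiv.ext fun i => Fin.ext ?_)
  have h₁ : i ∈ univ.filter fun j => (σ j : ℕ) < i + 1 := by
    rw [← mem_map' Fin.valEmbedding, hrange (i + 1) i.2]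
    simp
  have h₂ : i ∉ univ.filter fun j => (σ j : ℕ) < i := by
    rw [← mem_map' Fin.valEmbedding, hrange i i.2.le]
    simp
  simp only [mem_filter, mem_univ, true_and, not_lt] at h₁ h₂
  rw [Perm.one_apply]
  omega

end Equiv.Perm

namespace Ptn

lemma lt_ofTuple_of_perm (ν : Ptn) {σ : Equiv.Perm (Fin ν.len)} (hσ : σ ≠ 1)
    {β : Fin ν.len → ℕ} (hβ : ∀ i, (β i : ℤ) = ν.part (σ i) - (σ i : ℕ) + (i : ℕ)) :
    ν < ofTuple β := by
  -- For `A m = σ⁻¹ {0, …, m-1}`, the `β i` with `i ∈ A m` add up to `ν₀ + ⋯ + ν_{m-1}` plus the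
  -- excess `∑ i - ∑ σ i ≥ 0`, and the excesses all vanish only for `σ = 1`.
  set A : ℕ → Finset (Fin ν.len) := fun m => univ.filter fun i => (σ i : ℕ) < m
  have hsum : ∀ m ≤ ν.len, ∑ i ∈ A m, β i + ∑ j ∈ range m, j = ν.psum m + ∑ i ∈ A m, (i : ℕ) := by
    intro m hm
    have h₁ := σ.sum_filter_val_lt hm fun j => (ν.part j : ℤ)
    have h₂ := σ.sum_filter_val_lt hm fun j => (j : ℤ)
    have h₃ : ∑ i ∈ A m, (β i : ℤ) =
        ∑ i ∈ A m, ((ν.part (σ i) : ℤ) - (σ i : ℕ) + (i : ℕ)) := sum_congr rfl fun i _ => hβ i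
    rw [sum_add_distrib, sum_sub_distrib, h₁, h₂] at h₃
    zify [psum]
    linarith
  have hle : ∀ m ≤ ν.len,
      ν.psum m + ∑ i ∈ A m, (i : ℕ) ≤ (ofTuple β).psum m + ∑ j ∈ range m, j := by
    intro m hm
    have := sum_le_psum_ofTuple β (A m)
    rw [σ.card_filter_val_lt hm] at this
    have := hsum m hm
    omega
  have hN : ν.psum ν.len = (ofTuple β).psum ν.len := by
    have hA : A ν.len = univ := filter_true_of_mem fun i _ => (σ i).2
    have := hsum ν.len le_rfl
    rw [hA, Fin.sum_univ_eq_sum_range (fun i => i), ← psum_ofTuple] at this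
    omega
  refine lt_of_le_of_ne (le_of_psum_le (N := ν.len) (fun _ => ν.part_eq_zero_of_len_le)
    (fun _ => ofTuple_part_of_le β) (fun m hm => ?_) hN) fun heq => ?_
  · have := hle m hm
    have : ∑ j ∈ range m, j ≤ ∑ i ∈ A m, (i : ℕ) := σ.sum_range_le_sum_filter_val_lt hm
    omega
  · obtain ⟨m, hm, hlt⟩ : ∃ m ≤ ν.len, ∑ j ∈ range m, j < ∑ i ∈ A m, (i : ℕ) :=
      σ.exists_sum_range_lt_sum_filter_val_lt hσ
    have := hle m hm
    rw [← heq] at this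
    omega

end Ptn

section JacobiTrudi

open Submodule

lemma prod_hh_perm_mem_span (ν : Ptn) {σ : Equiv.Perm (Fin ν.len)} (hσ : σ ≠ 1) :
    ∏ i, hh ((ν.part (σ i) : ℤ) - (σ i : ℕ) + (i : ℕ)) ∈ span ℤ (hprod '' Set.Ioi ν) := by
  by_cases hneg : ∃ i, (ν.part (σ i) : ℤ) - (σ i : ℕ) + (i : ℕ) < 0
  · obtain ⟨i, hi⟩ := hneg
    rw [prod_eq_zero (mem_univ i) (by rw [hh, if_pos hi])]
    exact zero_mem _
  push Not at hneg
  set β : Fin ν.len → ℕ := fun i => ((ν.part (σ i) : ℤ) - (σ i : ℕ) + (i : ℕ)).toNat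
  have hβ : ∀ i, (β i : ℤ) = ν.part (σ i) - (σ i : ℕ) + (i : ℕ) :=
    fun i => Int.toNat_of_nonneg (hneg i)
  refine subset_span ⟨Ptn.ofTuple β, ν.lt_ofTuple_of_perm hσ hβ, ?_⟩
  simp only [Ptn.hprod_ofTuple, hβ]

lemma schur_sub_hprod_mem (ν : Ptn) : schur ν - hprod ν ∈ span ℤ (hprod '' Set.Ioi ν) := by
  have hdiag : hprod ν = ∏ i : Fin ν.len, hh (ν.part i) := by
    rw [hprod_eq_prod_range ν fun _ => ν.part_eq_zero_of_len_le,
      Fin.prod_univ_eq_prod_range fun i => hh (ν.part i)]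
  rw [schur, Matrix.det_apply, ← add_sum_erase _ _ (mem_univ 1), Equiv.Perm.sign_one, one_smul,
    hdiag]
  simp only [Equiv.Perm.one_apply, Matrix.of_apply, sub_add_cancel, add_sub_cancel_left]
  refine sum_mem fun σ hσ => ?_
  rw [Units.smul_def]
  exact smul_mem _ _ (prod_hh_perm_mem_span ν (ne_of_mem_erase hσ))

lemma isUnitriangular_schur_hprod : IsUnitriangular ℤ Set.univ schur hprod := fun ν _ => by
  simpa using schur_sub_hprod_mem ν

end JacobiTrudi

namespace Ptn

noncomputable def kBoundedAbove (k : ℕ) (lam : Ptn) : Finset Ptn :=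
  ((finite_Ioi lam).inter_of_right {mu | KBounded k mu}).toFinset

lemma mem_kBoundedAbove {k : ℕ} {lam mu : Ptn} :
    mu ∈ kBoundedAbove k lam ↔ KBounded k mu ∧ lam < mu :=
  Set.Finite.mem_toFinset _

end Ptn

section KSchur

open Submodule

variable {k : ℕ} {c : Ptn → Ptn} {s : Ptn → SF}

lemma kSchurFam_iff : KSchurFam k c s ↔ ∀ lam, KBounded k lam →
    hprod lam = s lam + ∑ mu ∈ Ptn.kBoundedAbove k lam, KNum k c mu lam • s mu := by
  have hset : ∀ lam, {mu | KBounded k mu ∧ Dominates mu lam ∧ mu ≠ lam} =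
      ↑(Ptn.kBoundedAbove k lam) := fun lam => by
    rw [Ptn.kBoundedAbove, Set.Finite.coe_toFinset, Ptn.Ioi_eq]
    rfl
  simp only [KSchurFam, hset, finsum_mem_coe_finset]

theorem existsUnique_kSchurFam (k : ℕ) (c : Ptn → Ptn) :
    ∃! s : Ptn → SF, (∀ lam, ¬ KBounded k lam → s lam = 0) ∧ KSchurFam k c s := by
  simp only [kSchurFam_iff]
  exact existsUnique_of_unitriangular_system {lam | KBounded k lam} (Ptn.kBoundedAbove k)
    (fun _ _ h => (Ptn.mem_kBoundedAbove.1 h).2) hprod fun mu lam => KNum k c mu lam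

lemma KSchurFam.isUnitriangular_hprod (hs : KSchurFam k c s) :
    IsUnitriangular ℤ {lam | KBounded k lam} hprod s := by
  intro lam hlam
  rw [kSchurFam_iff.1 hs lam hlam, add_sub_cancel_left]
  exact sum_mem fun mu hmu =>
    nsmul_mem (subset_span (Set.mem_image_of_mem s (Ptn.mem_kBoundedAbove.1 hmu))) _

lemma KSchurFam.sub_schur_mem_span (hs : KSchurFam k c s) {lam : Ptn} (hlam : KBounded k lam) :
    s lam - schur lam ∈ span ℤ (schur '' Set.Ioi lam) := by
  have hsh := hs.isUnitriangular_hprod.symm lam hlam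
  have hhs := isUnitriangular_schur_hprod.symm lam (Set.mem_univ lam)
  have hle := isUnitriangular_schur_hprod.symm.span_image_inter_Ioi_le lam
  rw [Set.univ_inter] at hhs hle
  rw [← sub_add_sub_cancel _ (hprod lam)]
  exact add_mem (hle (span_mono (Set.image_mono Set.inter_subset_right) hsh)) hhs

end KSchur

theorem stmt14_general (k : ℕ) (c : Ptn → Ptn) :
    (∃! s : Ptn → SF, (∀ lam, ¬ KBounded k lam → s lam = 0) ∧ KSchurFam k c s) ∧
    (∀ s : Ptn → SF, KSchurFam k c s →
      (LinearIndependent ℤ (fun lam : {lam : Ptn // KBounded k lam} => s (lam : Ptn))) ∧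
      (Submodule.span ℤ (Set.range fun lam : {lam : Ptn // KBounded k lam} => s (lam : Ptn)) =
        Subalgebra.toSubmodule (Lk k)) ∧
      (∀ lam, KBounded k lam → ∃ d : Ptn → ℤ,
        s lam = schur lam +
          ∑ᶠ mu ∈ {mu : Ptn | Dominates mu lam ∧ mu ≠ lam}, d mu • schur mu)) := by
  refine ⟨existsUnique_kSchurFam k c, fun s hs => ⟨?_, ?_, fun lam hlam => ?_⟩⟩
  · exact hs.isUnitriangular_hprod.symm.linearIndependent
      (fun lam => MvPolynomial.lcoeff ℤ (expFn lam)) (fun lam _ => coeff_expFn_hprod_self lam)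
      fun _ _ _ _ h => coeff_expFn_hprod_of_ne h
  · have hrange : Set.range (fun lam : {lam : Ptn // KBounded k lam} => s lam) =
        s '' {lam | KBounded k lam} := (Set.image_eq_range _ _).symm
    rw [hrange, le_antisymm hs.isUnitriangular_hprod.symm.span_image_le
      hs.isUnitriangular_hprod.span_image_le, span_hprod_kBounded]
  · obtain ⟨d, hd⟩ := Submodule.exists_finsum_eq_of_mem_span_image (Ptn.finite_Ioi lam)
      (hs.sub_schur_mem_span hlam)
    exact ⟨d, by rw [← Ptn.Ioi_eq, ← hd, add_sub_cancel]⟩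

/-- the `k`-Schur functions, defined by inverting the unitriangular
system `h_λ = s_λ^{(k)} + Σ_{μ ⊳ λ} K^{(k)}_{μλ} s_μ^{(k)}`, exist and are unique,
form a basis of `Λ^{(k)} = ℤ[h₁,…,h_k]`, and each expands as `s_λ` plus an integer
combination of Schur functions `s_μ` with `μ` strictly dominating `λ`. -/
theorem stmt14 (k : ℕ) (hk : 0 < k) (c cinv : Ptn → Ptn) (hc : CorePair k c cinv) :
    (∃! s : Ptn → SF, (∀ lam, ¬ KBounded k lam → s lam = 0) ∧ KSchurFam k c s) ∧
    (∀ s : Ptn → SF, KSchurFam k c s →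
      (LinearIndependent ℤ (fun lam : {lam : Ptn // KBounded k lam} => s (lam : Ptn))) ∧
      (Submodule.span ℤ (Set.range fun lam : {lam : Ptn // KBounded k lam} => s (lam : Ptn)) =
        Subalgebra.toSubmodule (Lk k)) ∧
      (∀ lam, KBounded k lam → ∃ d : Ptn → ℤ,
        s lam = schur lam +
          ∑ᶠ mu ∈ {mu : Ptn | Dominates mu lam ∧ mu ≠ lam}, d mu • schur mu)) :=
  stmt14_general k c
end
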